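/- Let Φ(z) = i(z - z₀)² and h > 0. If a is smooth with ∂̄ᵐ a = 0 in Ω and r_h ∈ Hᵐ(Ω), then u = e^{Φ/h}(a + r_h) ∈ H^{2m}(Ω) satisfies 𝓛u = 0 (with 𝓛 = ∂ᵐ∂̄ᵐ + Σ_{j,k<m} A_{j,k}∂ʲ∂̄ᵏ) if and only if f = a + r_h satisfies ∂ᵐ(e^{(Φ-Φ̄)/h} ∂̄ᵐ f) + Σ_{j,k=0}^{m-1} ∂ʲ(e^{(Φ-Φ̄)/h} A'_{j,k} ∂̄ᵏ f) = 0 in Ω, where A'_{j,k} are determined from A_{j,k} by A_{j,k} = Σ_{l≥j} binom(l,j)∂^{l-j}A'_{l,k}. -/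

import Mathlib

open Complex MeasureTheory Finset ComplexConjugate
open scoped ENNReal NNReal

noncomputable def wd (f : ℂ → ℂ) : ℂ → ℂ := fun z =>
  (fderiv ℝ f z 1 - Complex.I * fderiv ℝ f z Complex.I) / 2

noncomputable def wdb (f : ℂ → ℂ) : ℂ → ℂ := fun z =>
  (fderiv ℝ f z 1 + Complex.I * fderiv ℝ f z Complex.I) / 2

noncomputable def wdIter (n : ℕ) (f : ℂ → ℂ) : ℂ → ℂ := wd^[n] f
noncomputable def wdbIter (n : ℕ) (f : ℂ → ℂ) : ℂ → ℂ := wdb^[n] f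

/-! ### Basic lemmas about `wd` and `wdb` -/

lemma wd_congr {Ω : Set ℂ} (hΩ : IsOpen Ω) {f g : ℂ → ℂ} (hfg : ∀ z ∈ Ω, f z = g z) :
    ∀ z ∈ Ω, wd f z = wd g z := by
  intro z hz
  have h : f =ᶠ[nhds z] g := Filter.eventuallyEq_of_mem (hΩ.mem_nhds hz) hfg
  simp only [wd, h.fderiv_eq]

lemma wdb_congr {Ω : Set ℂ} (hΩ : IsOpen Ω) {f g : ℂ → ℂ} (hfg : ∀ z ∈ Ω, f z = g z) :
    ∀ z ∈ Ω, wdb f z = wdb g z := by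
  intro z hz
  have h : f =ᶠ[nhds z] g := Filter.eventuallyEq_of_mem (hΩ.mem_nhds hz) hfg
  simp only [wdb, h.fderiv_eq]

lemma wdIter_succ (n : ℕ) (f : ℂ → ℂ) : wdIter (n+1) f = wd (wdIter n f) := by
  simp only [wdIter, Function.iterate_succ', Function.comp_apply]

lemma wdbIter_succ (n : ℕ) (f : ℂ → ℂ) : wdbIter (n+1) f = wdb (wdbIter n f) := by
  simp only [wdbIter, Function.iterate_succ', Function.comp_apply]

lemma wdIter_succ' (n : ℕ) (f : ℂ → ℂ) : wdIter (n+1) f = wdIter n (wd f) := by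
  simp only [wdIter, Function.iterate_succ, Function.comp_apply]

lemma wdbIter_succ' (n : ℕ) (f : ℂ → ℂ) : wdbIter (n+1) f = wdbIter n (wdb f) := by
  simp only [wdbIter, Function.iterate_succ, Function.comp_apply]

lemma wdIter_congr {Ω : Set ℂ} (hΩ : IsOpen Ω) (n : ℕ) {f g : ℂ → ℂ}
    (hfg : ∀ z ∈ Ω, f z = g z) : ∀ z ∈ Ω, wdIter n f z = wdIter n g z := by
  induction n with
  | zero => simpa [wdIter] using hfg
  | succ n ih =>
    intro z hz
    rw [wdIter_succ, wdIter_succ]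
    exact wd_congr hΩ ih z hz

lemma wdbIter_congr {Ω : Set ℂ} (hΩ : IsOpen Ω) (n : ℕ) {f g : ℂ → ℂ}
    (hfg : ∀ z ∈ Ω, f z = g z) : ∀ z ∈ Ω, wdbIter n f z = wdbIter n g z := by
  induction n with
  | zero => simpa [wdbIter] using hfg
  | succ n ih =>
    intro z hz
    rw [wdbIter_succ, wdbIter_succ]
    exact wdb_congr hΩ ih z hz

lemma wd_mul {f g : ℂ → ℂ} {z : ℂ} (hf : DifferentiableAt ℝ f z)
    (hg : DifferentiableAt ℝ g z) :
    wd (fun w => f w * g w) z = wd f z * g z + f z * wd g z := by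
  simp only [wd, fderiv_fun_mul hf hg, ContinuousLinearMap.add_apply,
    ContinuousLinearMap.smul_apply, smul_eq_mul]
  ring

lemma wdb_mul {f g : ℂ → ℂ} {z : ℂ} (hf : DifferentiableAt ℝ f z)
    (hg : DifferentiableAt ℝ g z) :
    wdb (fun w => f w * g w) z = wdb f z * g z + f z * wdb g z := by
  simp only [wdb, fderiv_fun_mul hf hg, ContinuousLinearMap.add_apply,
    ContinuousLinearMap.smul_apply, smul_eq_mul]
  ring

lemma wd_const_mul (c : ℂ) {f : ℂ → ℂ} {z : ℂ} (hf : DifferentiableAt ℝ f z) :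
    wd (fun w => c * f w) z = c * wd f z := by
  simp only [wd, fderiv_const_mul hf c, ContinuousLinearMap.smul_apply, smul_eq_mul]
  ring

lemma wd_sum {ι : Type*} (s : Finset ι) (F : ι → ℂ → ℂ) {z : ℂ}
    (hF : ∀ i ∈ s, DifferentiableAt ℝ (F i) z) :
    wd (fun w => ∑ i ∈ s, F i w) z = ∑ i ∈ s, wd (F i) z := by
  simp only [wd, fderiv_fun_sum hF, ContinuousLinearMap.sum_apply]
  rw [Finset.mul_sum, ← Finset.sum_sub_distrib, ← Finset.sum_div]

lemma wdb_holo {f : ℂ → ℂ} {z : ℂ} (hf : DifferentiableAt ℂ f z) : wdb f z = 0 := by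
  have h1 : fderiv ℝ f z = (fderiv ℂ f z).restrictScalars ℝ :=
    hf.fderiv_restrictScalars ℝ
  have h2 : fderiv ℂ f z Complex.I = Complex.I • fderiv ℂ f z 1 := by
    rw [← ContinuousLinearMap.map_smul, smul_eq_mul, mul_one]
  simp only [wdb, h1, ContinuousLinearMap.coe_restrictScalars', h2, smul_eq_mul]
  ring_nf
  simp [Complex.I_sq]

lemma wd_antiholo {f : ℂ → ℂ} {z : ℂ} (hf : DifferentiableAt ℂ f z) :
    wd (fun w => conj (f w)) z = 0 := by
  have hc : (fun w => conj (f w)) = (⇑Complex.conjCLE ∘ f) := by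
    funext w; simp [Complex.conjCLE_apply]
  have h0 : fderiv ℝ (⇑Complex.conjCLE ∘ f) z =
      (Complex.conjCLE : ℂ ≃L[ℝ] ℂ).toContinuousLinearMap.comp (fderiv ℝ f z) :=
    Complex.conjCLE.comp_fderiv
  have h1 : fderiv ℝ f z = (fderiv ℂ f z).restrictScalars ℝ :=
    hf.fderiv_restrictScalars ℝ
  have h2 : fderiv ℂ f z Complex.I = Complex.I • fderiv ℂ f z 1 := by
    rw [← ContinuousLinearMap.map_smul, smul_eq_mul, mul_one]
  simp only [wd, hc, h0, ContinuousLinearMap.coe_comp', Function.comp_apply, h1,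
    ContinuousLinearMap.coe_restrictScalars', h2, smul_eq_mul,
    ContinuousLinearEquiv.coe_coe, Complex.conjCLE_apply, map_mul, Complex.conj_I]
  ring_nf
  simp [Complex.I_sq]

/-! ### Smoothness lemmas -/

lemma contDiffOn_wd {Ω : Set ℂ} (hΩ : IsOpen Ω) {f : ℂ → ℂ} {n : WithTop ℕ∞}
    (hf : ContDiffOn ℝ (n+1) f Ω) : ContDiffOn ℝ n (wd f) Ω := by
  have h1 : ContDiffOn ℝ n (fderiv ℝ f) Ω := hf.fderiv_of_isOpen hΩ le_rfl
  have h2 : ContDiffOn ℝ n (fun z => fderiv ℝ f z 1) Ω := h1.clm_apply contDiffOn_const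
  have h3 : ContDiffOn ℝ n (fun z => fderiv ℝ f z Complex.I) Ω := h1.clm_apply contDiffOn_const
  exact (h2.sub (contDiffOn_const.mul h3)).div_const 2

lemma contDiffOn_wdb {Ω : Set ℂ} (hΩ : IsOpen Ω) {f : ℂ → ℂ} {n : WithTop ℕ∞}
    (hf : ContDiffOn ℝ (n+1) f Ω) : ContDiffOn ℝ n (wdb f) Ω := by
  have h1 : ContDiffOn ℝ n (fderiv ℝ f) Ω := hf.fderiv_of_isOpen hΩ le_rfl
  have h2 : ContDiffOn ℝ n (fun z => fderiv ℝ f z 1) Ω := h1.clm_apply contDiffOn_const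
  have h3 : ContDiffOn ℝ n (fun z => fderiv ℝ f z Complex.I) Ω := h1.clm_apply contDiffOn_const
  exact (h2.add (contDiffOn_const.mul h3)).div_const 2

lemma contDiffOn_wdIter {Ω : Set ℂ} (hΩ : IsOpen Ω) (k : ℕ) {n : WithTop ℕ∞} (f : ℂ → ℂ)
    (hf : ContDiffOn ℝ (n + k) f Ω) : ContDiffOn ℝ n (wdIter k f) Ω := by
  induction k generalizing f with
  | zero => simpa [wdIter] using hf
  | succ k ih =>
    rw [wdIter_succ']
    refine ih (wd f) (contDiffOn_wd hΩ ?_)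
    have hcast : (n + (k:WithTop ℕ∞)) + 1 = n + ((k+1 : ℕ) : WithTop ℕ∞) := by
      push_cast
      rw [add_assoc]
    rw [hcast]
    exact hf

lemma contDiffOn_wdbIter {Ω : Set ℂ} (hΩ : IsOpen Ω) (k : ℕ) {n : WithTop ℕ∞} (f : ℂ → ℂ)
    (hf : ContDiffOn ℝ (n + k) f Ω) : ContDiffOn ℝ n (wdbIter k f) Ω := by
  induction k generalizing f with
  | zero => simpa [wdbIter] using hf
  | succ k ih =>
    rw [wdbIter_succ']
    refine ih (wdb f) (contDiffOn_wdb hΩ ?_)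
    have hcast : (n + (k:WithTop ℕ∞)) + 1 = n + ((k+1 : ℕ) : WithTop ℕ∞) := by
      push_cast
      rw [add_assoc]
    rw [hcast]
    exact hf

lemma diffAt_of_one {Ω : Set ℂ} (hΩ : IsOpen Ω) {f : ℂ → ℂ}
    (hf : ContDiffOn ℝ 1 f Ω) {z : ℂ} (hz : z ∈ Ω) : DifferentiableAt ℝ f z :=
  (hf.differentiableOn one_ne_zero).differentiableAt (hΩ.mem_nhds hz)

lemma diffAt_wdIter {Ω : Set ℂ} (hΩ : IsOpen Ω) (k : ℕ) {f : ℂ → ℂ} {n : ℕ}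
    (hf : ContDiffOn ℝ (n : ℕ) f Ω) (hkn : k + 1 ≤ n) {z : ℂ} (hz : z ∈ Ω) :
    DifferentiableAt ℝ (wdIter k f) z := by
  refine diffAt_of_one hΩ (contDiffOn_wdIter hΩ k f ?_) hz
  refine hf.of_le ?_
  have h' : 1 + k ≤ n := by omega
  have : ((1 + k : ℕ) : WithTop ℕ∞) ≤ (n : WithTop ℕ∞) := by exact_mod_cast h'
  simpa using this

lemma diffAt_wdbIter {Ω : Set ℂ} (hΩ : IsOpen Ω) (k : ℕ) {f : ℂ → ℂ} {n : ℕ}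
    (hf : ContDiffOn ℝ (n : ℕ) f Ω) (hkn : k + 1 ≤ n) {z : ℂ} (hz : z ∈ Ω) :
    DifferentiableAt ℝ (wdbIter k f) z := by
  refine diffAt_of_one hΩ (contDiffOn_wdbIter hΩ k f ?_) hz
  refine hf.of_le ?_
  have h' : 1 + k ≤ n := by omega
  have : ((1 + k : ℕ) : WithTop ℕ∞) ≤ (n : WithTop ℕ∞) := by exact_mod_cast h'
  simpa using this

/-! ### Commuting the exponential factors through the derivatives -/

lemma wdbIter_holo_mul {Ω : Set ℂ} (hΩ : IsOpen Ω) (E : ℂ → ℂ) (hE : Differentiable ℂ E)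
    (k : ℕ) (f : ℂ → ℂ) (hf : ContDiffOn ℝ (k : ℕ) f Ω) :
    ∀ z ∈ Ω, wdbIter k (fun w => E w * f w) z = E z * wdbIter k f z := by
  induction k generalizing f with
  | zero => intro z hz; simp [wdbIter]
  | succ k ih =>
    intro z hz
    have hf' : ContDiffOn ℝ (k : ℕ) f Ω :=
      hf.of_le (by exact_mod_cast Nat.cast_le.mpr (Nat.le_succ k))
    have h1 : ∀ w ∈ Ω, wdbIter k (fun w => E w * f w) w = E w * wdbIter k f w := ih f hf'
    rw [wdbIter_succ, wdb_congr hΩ h1 z hz,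
      wdb_mul ((hE.restrictScalars ℝ) z) (diffAt_wdbIter hΩ k hf le_rfl hz),
      wdb_holo (hE z), zero_mul, zero_add, ← wdbIter_succ]

lemma wdIter_antiholo_mul {Ω : Set ℂ} (hΩ : IsOpen Ω) (E : ℂ → ℂ) (hE : Differentiable ℂ E)
    (k : ℕ) (f : ℂ → ℂ) (hf : ContDiffOn ℝ (k : ℕ) f Ω) :
    ∀ z ∈ Ω, wdIter k (fun w => conj (E w) * f w) z = conj (E z) * wdIter k f z := by
  induction k generalizing f with
  | zero => intro z hz; simp [wdIter]
  | succ k ih =>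
    intro z hz
    have hf' : ContDiffOn ℝ (k : ℕ) f Ω :=
      hf.of_le (by exact_mod_cast Nat.cast_le.mpr (Nat.le_succ k))
    have h1 : ∀ w ∈ Ω, wdIter k (fun w => conj (E w) * f w) w = conj (E w) * wdIter k f w :=
      ih f hf'
    have hEd : DifferentiableAt ℝ (fun w => conj (E w)) z := by
      have : (fun w => conj (E w)) = (⇑Complex.conjCLE ∘ E) := by
        funext w; simp [Complex.conjCLE_apply]
      rw [this]
      exact (Complex.conjCLE.differentiable.differentiableAt).comp z
        ((hE.restrictScalars ℝ) z)
    rw [wdIter_succ, wd_congr hΩ h1 z hz,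
      wd_mul hEd (diffAt_wdIter hΩ k hf le_rfl hz),
      wd_antiholo (hE z), zero_mul, zero_add, ← wdIter_succ]

/-! ### Leibniz rule -/

lemma pascal_sum (l : ℕ) (a b : ℕ → ℂ) :
    ∑ j ∈ Finset.range (l+2), (Nat.choose (l+1) j : ℂ) * (a (l+1-j) * b j)
    = ∑ j ∈ Finset.range (l+1), (Nat.choose l j : ℂ) *
        (a (l-j+1) * b j + a (l-j) * b (j+1)) := by
  have hrhs : ∑ j ∈ Finset.range (l+1), (Nat.choose l j : ℂ) *
        (a (l-j+1) * b j + a (l-j) * b (j+1))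
      = (∑ j ∈ Finset.range (l+1), (Nat.choose l j : ℂ) * (a (l-j+1) * b j))
        + ∑ j ∈ Finset.range (l+1), (Nat.choose l j : ℂ) * (a (l-j) * b (j+1)) := by
    rw [← Finset.sum_add_distrib]
    exact Finset.sum_congr rfl fun j _ => by ring
  rw [hrhs]
  rw [Finset.sum_range_succ' (fun j => (Nat.choose (l+1) j : ℂ) * (a (l+1-j) * b j)) (l+1)]
  have hA : ∀ j ∈ Finset.range (l+1),
      (Nat.choose (l+1) (j+1) : ℂ) * (a (l+1-(j+1)) * b (j+1))
      = (Nat.choose l j : ℂ) * (a (l-j) * b (j+1))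
        + (Nat.choose l (j+1) : ℂ) * (a (l-j) * b (j+1)) := by
    intro j _
    have hc : ((l+1).choose (j+1) : ℂ) = (l.choose j : ℂ) + (l.choose (j+1) : ℂ) := by
      rw [Nat.choose_succ_succ]; push_cast; ring
    have hs : l + 1 - (j + 1) = l - j := by omega
    rw [hc, hs]; ring
  rw [Finset.sum_congr rfl hA, Finset.sum_add_distrib]
  have hB : ∑ j ∈ Finset.range (l+1), (Nat.choose l (j+1) : ℂ) * (a (l-j) * b (j+1))
      = ∑ j ∈ Finset.range l, (Nat.choose l (j+1) : ℂ) * (a (l-j) * b (j+1)) := by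
    rw [Finset.sum_range_succ, Nat.choose_succ_self]
    simp
  have hC : ∑ j ∈ Finset.range (l+1), (Nat.choose l j : ℂ) * (a (l-j+1) * b j)
      = (∑ j ∈ Finset.range l, (Nat.choose l (j+1) : ℂ) * (a (l-j) * b (j+1)))
        + (Nat.choose l 0 : ℂ) * (a (l+1) * b 0) := by
    rw [Finset.sum_range_succ' (fun j => (Nat.choose l j : ℂ) * (a (l-j+1) * b j)) l]
    congr 1
    refine Finset.sum_congr rfl fun j hj => ?_
    have : l - (j+1) + 1 = l - j := by
      have := Finset.mem_range.mp hj; omega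
    rw [this]
  rw [hB, hC]
  simp only [Nat.choose_zero_right, Nat.cast_one, Nat.choose_self]
  push_cast
  ring

lemma wdIter_leibniz {Ω : Set ℂ} (hΩ : IsOpen Ω) (l : ℕ) (A g : ℂ → ℂ)
    (hA : ContDiffOn ℝ (⊤ : ℕ∞) A Ω) (hg : ContDiffOn ℝ (l : ℕ) g Ω) :
    ∀ z ∈ Ω, wdIter l (fun w => A w * g w) z
      = ∑ j ∈ Finset.range (l+1), (Nat.choose l j : ℂ) *
          (wdIter (l-j) A z * wdIter j g z) := by
  induction l generalizing g with
  | zero => intro z hz; simp [wdIter]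
  | succ l ih =>
    intro z hz
    have hg' : ContDiffOn ℝ (l : ℕ) g Ω :=
      hg.of_le (by exact_mod_cast Nat.le_succ l)
    have hkey : ∀ w ∈ Ω, wdIter l (fun w => A w * g w) w =
        (fun w => ∑ j ∈ Finset.range (l+1), (Nat.choose l j : ℂ) *
          (wdIter (l-j) A w * wdIter j g w)) w := ih g hg'
    have hdA : ∀ j : ℕ, DifferentiableAt ℝ (wdIter (l-j) A) z := fun j =>
      diffAt_of_one hΩ (contDiffOn_wdIter hΩ (l-j) A (hA.of_le (by norm_cast; exact WithTop.coe_le_coe.mpr le_top))) hz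
    have hdg : ∀ j ∈ Finset.range (l+1), DifferentiableAt ℝ (wdIter j g) z := by
      intro j hj
      have hj' := Finset.mem_range.mp hj
      exact diffAt_wdIter hΩ j hg (by omega) hz
    have hws := wd_sum (Finset.range (l+1))
      (fun j w => (Nat.choose l j : ℂ) * (wdIter (l-j) A w * wdIter j g w))
      (fun j hj => ((hdA j).mul (hdg j hj)).const_mul _)
    rw [wdIter_succ, wd_congr hΩ hkey z hz, hws]
    have hterm : ∀ j ∈ Finset.range (l+1),
        wd (fun w => (Nat.choose l j : ℂ) * (wdIter (l-j) A w * wdIter j g w)) z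
        = (Nat.choose l j : ℂ) *
            (wdIter (l-j+1) A z * wdIter j g z + wdIter (l-j) A z * wdIter (j+1) g z) := by
      intro j hj
      rw [wd_const_mul _ (f := fun w => wdIter (l-j) A w * wdIter j g w) ((hdA j).mul (hdg j hj)), wd_mul (hdA j) (hdg j hj),
        ← wdIter_succ, ← wdIter_succ]
    rw [Finset.sum_congr rfl hterm]
    exact (pascal_sum l (fun p => wdIter p A z) (fun q => wdIter q g z)).symm

lemma sum_range_to_fin (m l : ℕ) (hl : l < m) (F : ℕ → ℂ) :
    ∑ j ∈ Finset.range (l+1), F j = ∑ j : Fin m, if (j:ℕ) ≤ l then F j else 0 := by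
  rw [Fin.sum_univ_eq_sum_range (fun j => if j ≤ l then F j else 0) m, ← Finset.sum_filter]
  congr 1
  ext j
  simp only [Finset.mem_filter, Finset.mem_range]
  omega

/-- For u = e^{Φ/h}(a + r_h) with ∂̄ᵐa = 0, 𝓛u = 0 holds iff f = a + r_h satisfies the
    conjugated equation ∂ᵐ(e^{(Φ-Φ̄)/h}∂̄ᵐf) + Σ ∂ʲ(e^{(Φ-Φ̄)/h}A'_{j,k}∂̄ᵏf) = 0,
    where A_{j,k} = Σ_{l≥j} binom(l,j)∂^{l-j}A'_{l,k}. -/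
theorem stmt18 (m : ℕ) (hm : 2 ≤ m) (Ω : Set ℂ) (hΩ : IsOpen Ω)
    (hΩb : Bornology.IsBounded Ω)
    (z₀ : ℂ) (Φ : ℂ → ℂ) (hΦ : ∀ z, Φ z = Complex.I * (z - z₀) ^ 2)
    (h : ℝ) (hh : 0 < h)
    (A A' : Fin m → Fin m → ℂ → ℂ)
    (hA' : ∀ j k, ContDiffOn ℝ (⊤ : ℕ∞) (A' j k) Ω)
    (hrel : ∀ j k : Fin m, ∀ z ∈ Ω, A j k z =
      ∑ l : Fin m, if (j : ℕ) ≤ (l : ℕ) then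
        (Nat.choose l j : ℂ) * wdIter ((l : ℕ) - (j : ℕ)) (A' l k) z else 0)
    (a r : ℂ → ℂ) (ha : ContDiff ℝ (⊤ : ℕ∞) a) (hab : ∀ z ∈ Ω, wdbIter m a z = 0)
    (hr : ContDiffOn ℝ (2 * m) r Ω)
    (u f : ℂ → ℂ) (hf : ∀ z, f z = a z + r z)
    (hu : ∀ z, u z = Complex.exp (Φ z / (h : ℂ)) * f z) :
    (∀ z ∈ Ω, wdIter m (wdbIter m u) z +
        ∑ j : Fin m, ∑ k : Fin m, A j k z * wdIter j (wdbIter k u) z = 0)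
      ↔
    (∀ z ∈ Ω,
      wdIter m (fun w =>
        Complex.exp ((Φ w - conj (Φ w)) / (h : ℂ)) * wdbIter m f w) z +
        ∑ j : Fin m, ∑ k : Fin m,
          wdIter j (fun w =>
            Complex.exp ((Φ w - conj (Φ w)) / (h : ℂ)) * A' j k w * wdbIter k f w) z = 0) := by
  -- Smoothness of the various exponential weights
  have hΦeq : Φ = fun z => Complex.I * (z - z₀) ^ 2 := funext hΦ
  have hΦd : Differentiable ℂ Φ := by
    rw [hΦeq]
    exact (differentiable_const _).mul ((differentiable_id.sub (differentiable_const _)).pow 2)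
  have hΦsmC : ContDiff ℂ ⊤ Φ := by
    rw [hΦeq]
    exact contDiff_const.mul ((contDiff_id.sub contDiff_const).pow 2)
  have hΦsm : ContDiff ℝ (⊤ : ℕ∞) Φ := (hΦsmC.restrict_scalars ℝ).of_le le_top
  have hEdiff : Differentiable ℂ (fun w => Complex.exp (Φ w / (h:ℂ))) :=
    (hΦd.div_const _).cexp
  have hEsm : ContDiff ℝ (⊤ : ℕ∞) (fun w => Complex.exp (Φ w / (h:ℂ))) :=
    (((hΦsmC.div_const _).cexp).restrict_scalars ℝ).of_le le_top
  have hconjΦ : ContDiff ℝ (⊤ : ℕ∞) (fun w => conj (Φ w)) := by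
    have hc : (fun w => conj (Φ w)) = (⇑Complex.conjCLE ∘ Φ) := by
      funext w; simp [Complex.conjCLE_apply]
    rw [hc]
    exact Complex.conjCLE.contDiff.comp hΦsm
  have hexpR : ContDiff ℝ (⊤ : WithTop ℕ∞) Complex.exp :=
    ContDiff.restrict_scalars ℝ (𝕜' := ℂ) Complex.contDiff_exp
  have hGsm : ContDiff ℝ (⊤ : ℕ∞) (fun w => Complex.exp ((Φ w - conj (Φ w)) / (h:ℂ))) :=
    (hexpR.of_le le_top).comp ((hΦsm.sub hconjΦ).div_const ((h:ℂ)))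
  have hEG : ∀ w : ℂ, Complex.exp (Φ w / (h:ℂ))
      = conj (Complex.exp (Φ w / (h:ℂ))) * Complex.exp ((Φ w - conj (Φ w)) / (h:ℂ)) := by
    intro w
    rw [← Complex.exp_conj, ← Complex.exp_add, map_div₀, Complex.conj_ofReal,
      ← add_div]
    congr 1
    ring
  -- Regularity of f and u
  have hfC : ContDiffOn ℝ ((2*m : ℕ) : WithTop ℕ∞) f Ω := by
    have hfe : f = fun z => a z + r z := funext hf
    rw [hfe]
    refine ContDiffOn.add ((ha.of_le (by norm_cast; exact WithTop.coe_le_coe.mpr le_top)).contDiffOn) ?_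
    exact_mod_cast hr
  have huC : ContDiffOn ℝ ((2*m : ℕ) : WithTop ℕ∞) u Ω := by
    have hue : u = fun w => Complex.exp (Φ w / (h:ℂ)) * f w := funext hu
    rw [hue]
    exact (hEsm.contDiffOn.of_le (by norm_cast; exact WithTop.coe_le_coe.mpr le_top)).mul hfC
  have hfle : ∀ k : ℕ, k ≤ 2*m → ContDiffOn ℝ (k : ℕ) f Ω := fun k hk =>
    hfC.of_le (by exact_mod_cast hk)
  have hule : ∀ k : ℕ, k ≤ 2*m → ContDiffOn ℝ (k : ℕ) u Ω := fun k hk =>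
    huC.of_le (by exact_mod_cast hk)
  -- commuting e^{Φ/h} out of ∂̄ᵏ
  have hwdbu : ∀ k : ℕ, k ≤ 2*m → ∀ z ∈ Ω, wdbIter k u z
      = Complex.exp (Φ z / (h:ℂ)) * wdbIter k f z := by
    intro k hk z hz
    have h1 := wdbIter_congr hΩ k (f := u)
      (g := fun w => Complex.exp (Φ w / (h:ℂ)) * f w) (fun w _ => hu w) z hz
    rw [h1]
    exact wdbIter_holo_mul hΩ _ hEdiff k f (hfle k hk) z hz
  have hwdbfC : ∀ k n : ℕ, n + k ≤ 2*m → ContDiffOn ℝ (n : ℕ) (wdbIter k f) Ω := by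
    intro k n hnk
    refine contDiffOn_wdbIter hΩ k f ?_
    have h1 := hfle (n+k) hnk
    have hcst : ((n + k : ℕ) : WithTop ℕ∞) = (n : WithTop ℕ∞) + (k : ℕ) := by push_cast; rfl
    rwa [hcst] at h1
  -- the top-order term
  have hTop : ∀ z ∈ Ω, wdIter m (wdbIter m u) z
      = conj (Complex.exp (Φ z / (h:ℂ))) *
        wdIter m (fun w => Complex.exp ((Φ w - conj (Φ w)) / (h:ℂ)) * wdbIter m f w) z := by
    intro z hz
    have h1 : ∀ w ∈ Ω, wdbIter m u w
        = conj (Complex.exp (Φ w / (h:ℂ))) *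
          ((fun w => Complex.exp ((Φ w - conj (Φ w)) / (h:ℂ)) * wdbIter m f w) w) := by
      intro w hw
      conv_lhs => rw [hwdbu m (by omega) w hw, hEG w]
      ring
    rw [wdIter_congr hΩ m h1 z hz]
    exact wdIter_antiholo_mul hΩ _ hEdiff m _
      ((hGsm.contDiffOn.of_le (by exact_mod_cast le_top)).mul (hwdbfC m m (by omega))) z hz
  -- the lower-order terms, for each fixed k
  have hSum : ∀ k : Fin m, ∀ z ∈ Ω,
      ∑ j : Fin m, A j k z * wdIter j (wdbIter k u) z
      = conj (Complex.exp (Φ z / (h:ℂ))) *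
        ∑ l : Fin m, wdIter l (fun w =>
          Complex.exp ((Φ w - conj (Φ w)) / (h:ℂ)) * A' l k w * wdbIter k f w) z := by
    intro k z hz
    have hvC : ∀ l : Fin m, ContDiffOn ℝ ((l:ℕ) : WithTop ℕ∞) (wdbIter k u) Ω := by
      intro l
      refine contDiffOn_wdbIter hΩ k u ?_
      have h1 : ((l:ℕ) + (k:ℕ)) ≤ 2*m := by
        have := l.isLt; have := k.isLt; omega
      have h2 := hule _ h1
      have hcst : (((l:ℕ) + (k:ℕ) : ℕ) : WithTop ℕ∞)
          = (((l:ℕ) : ℕ) : WithTop ℕ∞) + ((k:ℕ) : ℕ) := by push_cast; rfl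
      rwa [hcst] at h2
    calc ∑ j : Fin m, A j k z * wdIter j (wdbIter k u) z
        = ∑ j : Fin m, ∑ l : Fin m, (if (j:ℕ) ≤ (l:ℕ) then
            (Nat.choose (l:ℕ) (j:ℕ) : ℂ) *
              (wdIter ((l:ℕ)-(j:ℕ)) (A' l k) z * wdIter (j:ℕ) (wdbIter k u) z) else 0) := by
          refine Finset.sum_congr rfl fun j _ => ?_
          rw [hrel j k z hz, Finset.sum_mul]
          refine Finset.sum_congr rfl fun l _ => ?_
          rw [ite_mul, zero_mul, mul_assoc]
      _ = ∑ l : Fin m, ∑ j : Fin m, (if (j:ℕ) ≤ (l:ℕ) then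
            (Nat.choose (l:ℕ) (j:ℕ) : ℂ) *
              (wdIter ((l:ℕ)-(j:ℕ)) (A' l k) z * wdIter (j:ℕ) (wdbIter k u) z) else 0) :=
          Finset.sum_comm
      _ = ∑ l : Fin m, wdIter (l:ℕ) (fun w => A' l k w * wdbIter k u w) z := by
          refine Finset.sum_congr rfl fun l _ => ?_
          rw [wdIter_leibniz hΩ (l:ℕ) (A' l k) (wdbIter k u) (hA' l k) (hvC l) z hz,
            sum_range_to_fin m (l:ℕ) l.isLt
              (fun j => (Nat.choose (l:ℕ) j : ℂ) *
                (wdIter ((l:ℕ)-j) (A' l k) z * wdIter j (wdbIter k u) z))]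
      _ = ∑ l : Fin m, conj (Complex.exp (Φ z / (h:ℂ))) *
            wdIter (l:ℕ) (fun w =>
              Complex.exp ((Φ w - conj (Φ w)) / (h:ℂ)) * A' l k w * wdbIter k f w) z := by
          refine Finset.sum_congr rfl fun l _ => ?_
          have heqw : ∀ w ∈ Ω, A' l k w * wdbIter k u w
              = conj (Complex.exp (Φ w / (h:ℂ))) *
                ((fun w => Complex.exp ((Φ w - conj (Φ w)) / (h:ℂ)) * A' l k w *
                  wdbIter k f w) w) := by
            intro w hw
            conv_lhs => rw [hwdbu (k:ℕ) (by have := k.isLt; omega) w hw, hEG w]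
            ring
          rw [wdIter_congr hΩ (l:ℕ) heqw z hz]
          refine wdIter_antiholo_mul hΩ _ hEdiff (l:ℕ) _ ?_ z hz
          refine ContDiffOn.mul ?_ (hwdbfC (k:ℕ) (l:ℕ)
            (by have := k.isLt; have := l.isLt; omega))
          exact (hGsm.contDiffOn.of_le (by exact_mod_cast le_top)).mul ((hA' l k).of_le (by exact_mod_cast le_top))
      _ = conj (Complex.exp (Φ z / (h:ℂ))) *
            ∑ l : Fin m, wdIter (l:ℕ) (fun w =>
              Complex.exp ((Φ w - conj (Φ w)) / (h:ℂ)) * A' l k w * wdbIter k f w) z := by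
          rw [Finset.mul_sum]
  -- the key pointwise identity
  have key : ∀ z ∈ Ω,
      wdIter m (wdbIter m u) z +
        ∑ j : Fin m, ∑ k : Fin m, A j k z * wdIter j (wdbIter k u) z
      = conj (Complex.exp (Φ z / (h:ℂ))) *
        (wdIter m (fun w =>
            Complex.exp ((Φ w - conj (Φ w)) / (h:ℂ)) * wdbIter m f w) z +
          ∑ j : Fin m, ∑ k : Fin m, wdIter j (fun w =>
            Complex.exp ((Φ w - conj (Φ w)) / (h:ℂ)) * A' j k w * wdbIter k f w) z) := by
    intro z hz
    rw [hTop z hz]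
    have hsw : ∑ j : Fin m, ∑ k : Fin m, A j k z * wdIter j (wdbIter k u) z
        = ∑ k : Fin m, ∑ j : Fin m, A j k z * wdIter j (wdbIter k u) z := Finset.sum_comm
    rw [hsw, Finset.sum_congr rfl (fun k _ => hSum k z hz), ← Finset.mul_sum, ← mul_add]
    congr 2
    exact Finset.sum_comm
  -- conclusion
  constructor
  · intro H z hz
    have h0 := (key z hz).symm.trans (H z hz)
    rcases mul_eq_zero.mp h0 with hcase | hcase
    · rw [← Complex.exp_conj] at hcase
      exact absurd hcase (Complex.exp_ne_zero _)
    · exact hcase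
  · intro H z hz
    rw [key z hz, H z hz, mul_zero]
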